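/- Let Ω ⊆ ℝ² be an open set with coordinates (u,v) and f > 0 a real number (the focal length). Let ρ, ρ* : Ω → ℝ be positive differentiable functions and n, n* : Ω → ℝ³ be differentiable maps with |n| = |n*| = 1, n₃ < 0 and n₃* < 0 on Ω. Set m = ρ·(1, n₁, n₂, n₃) : Ω → ℝ⁴ and m* = ρ*·(1, n₁*, n₂*, n₃*), and suppose m* = A m on Ω for some scaled Lorentz transformation A. Assume both satisfy the perspective integrability constraint: at every point (u,v) ∈ Ω, u·c^{2,3}_u + v·c^{2,3}_v + f·c^{2,4}_v − f·c^{3,4}_u = 0, where the c^{i,j}_k are formed from m, and the analogous equation holds with the quantities formed from m*. Assume the surface is non-degenerate: the 17 real-valued functions on Ω given by f·c^{i,j}_u and f·c^{i,j}_v for all 1 ≤ i < j ≤ 4, together with (u,v) ↦ u·c^{i,j}_u(u,v) + v·c^{i,j}_v(u,v) for (i,j) ∈ {(1,2),(1,3),(1,4),(2,4),(3,4)}, are linearly independent over ℝ. Then A = α·I₄ for some α > 0, where I₄ is the 4×4 identity matrix. -/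

import Mathlib

/-- The Minkowski quadratic form on ℝ⁴: q(t,x,y,z) = x² + y² + z² − t². -/
def mink (x : Fin 4 → ℝ) : ℝ := (x 1)^2 + (x 2)^2 + (x 3)^2 - (x 0)^2

/-- A real 4×4 matrix is a Lorentz transformation if it preserves the Minkowski form. -/
def IsLorentz (A : Matrix (Fin 4) (Fin 4) ℝ) : Prop :=
  ∀ x : Fin 4 → ℝ, mink (A.mulVec x) = mink x

/-- A scaled Lorentz transformation: a nonzero multiple of a Lorentz transformation. -/
def IsScaledLorentz (A : Matrix (Fin 4) (Fin 4) ℝ) : Prop :=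
  ∃ s : ℝ, s ≠ 0 ∧ ∃ B : Matrix (Fin 4) (Fin 4) ℝ, IsLorentz B ∧ A = s • B

/-- Partial derivative with respect to the first coordinate u. -/
noncomputable def pu (g : ℝ × ℝ → ℝ) (x : ℝ × ℝ) : ℝ := fderiv ℝ g x (1, 0)

/-- Partial derivative with respect to the second coordinate v. -/
noncomputable def pv (g : ℝ × ℝ → ℝ) (x : ℝ × ℝ) : ℝ := fderiv ℝ g x (0, 1)

/-- c^{i,j}_k = c_j·∂_k c_i − c_i·∂_k c_j, where d is the partial derivative ∂_k. -/
noncomputable def cmin (d : (ℝ × ℝ → ℝ) → ℝ × ℝ → ℝ) (c : Fin 4 → ℝ × ℝ → ℝ)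
    (i j : Fin 4) (x : ℝ × ℝ) : ℝ :=
  c j x * d (c i) x - c i x * d (c j) x

/-!
Each `c*^{ij}` is the combination of the `c^{pq}` with the 2×2 minors of rows `i, j` of `A` as
coefficients. So the integrability constraint of `m* = A m` minus `λ` times that of `m`
(`λ = minor2 A 1 2 1 2`) is a linear relation among the seventeen non-degeneracy functions, and
their independence makes every minor of two spatial rows of `A` equal to `λ` times the
corresponding minor of the identity. As `A η Aᵀ = t η`, the Minkowski Lagrange identity gives
`λ² = t² ≠ 0`; hence each pair of spatial rows spans the corresponding coordinate plane, the
spatial rows are `a eᵢ`, the time row is `± a e₀`, and `A = a • 1` or `A = a • η`. The signs of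
`ρ`, `ρ*` and of `ρ n₃`, `ρ* n₃*` at a point of `Ω` exclude the second case and give `a > 0`.

Indices start at 0, as in the statement: the paper's pairs (2,3), (2,4), (3,4) are `1 2`, `1 3`,
`2 3` here.
-/

open Matrix Topology

theorem Matrix.IsSymm.ext_of_dotProduct_mulVec_self {n : Type*} [Fintype n] [DecidableEq n]
    {S T : Matrix n n ℝ} (hS : S.IsSymm) (hT : T.IsSymm)
    (h : ∀ x, x ⬝ᵥ S *ᵥ x = x ⬝ᵥ T *ᵥ x) : S = T := by
  have hpolar (M : Matrix n n ℝ) (i j : n) :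
      (Pi.single i 1 + Pi.single j 1) ⬝ᵥ M *ᵥ (Pi.single i 1 + Pi.single j 1)
        = M i i + M i j + M j i + M j j := by
    simp [mulVec_add, add_dotProduct, dotProduct_add]
    ring
  ext i j
  have hij := h (Pi.single i 1 + Pi.single j 1)
  have hi := h (Pi.single i 1)
  have hj := h (Pi.single j 1)
  simp only [hpolar, mulVec_single_one, single_one_dotProduct, col_apply] at hij hi hj
  linarith [hS.apply i j, hT.apply i j]

notation "η" => Matrix.diagonal ![(-1 : ℝ), 1, 1, 1]

theorem mink_eq_dotProduct_mulVec (x : Fin 4 → ℝ) : mink x = x ⬝ᵥ η *ᵥ x := by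
  simp [mink, mulVec_diagonal, dotProduct, Fin.sum_univ_four]
  ring

theorem minkowski_mul_self : η * η = 1 := by
  rw [diagonal_mul_diagonal, ← diagonal_one]
  congr 1
  ext i
  fin_cases i <;> simp

theorem IsLorentz.transpose_mul_mul_self {B : Matrix (Fin 4) (Fin 4) ℝ} (hB : IsLorentz B) :
    Bᵀ * η * B = η := by
  refine IsSymm.ext_of_dotProduct_mulVec_self ?_ (isSymm_diagonal _) fun x => ?_
  · simp [IsSymm, transpose_mul, Matrix.mul_assoc]
  · rw [← mulVec_mulVec, ← mulVec_mulVec, dotProduct_transpose_mulVec, dotProduct_comm,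
      ← mink_eq_dotProduct_mulVec, ← mink_eq_dotProduct_mulVec, hB]

theorem IsLorentz.mul_mul_transpose {B : Matrix (Fin 4) (Fin 4) ℝ} (hB : IsLorentz B) :
    B * η * Bᵀ = η := by
  have hinv : (η * Bᵀ * η) * B = 1 := by
    rw [Matrix.mul_assoc, Matrix.mul_assoc, ← Matrix.mul_assoc Bᵀ, hB.transpose_mul_mul_self,
      minkowski_mul_self]
  have h := congrArg (· * η) (mul_eq_one_comm.mp hinv)
  simpa only [Matrix.mul_assoc, minkowski_mul_self, Matrix.mul_one, Matrix.one_mul] using h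

theorem IsScaledLorentz.exists_mul_mul_transpose {A : Matrix (Fin 4) (Fin 4) ℝ}
    (hA : IsScaledLorentz A) : ∃ t : ℝ, 0 < t ∧ A * η * Aᵀ = t • η := by
  obtain ⟨s, hs, B, hB, rfl⟩ := hA
  refine ⟨s ^ 2, by positivity, ?_⟩
  rw [transpose_smul, Matrix.smul_mul, Matrix.mul_smul, Matrix.smul_mul, hB.mul_mul_transpose,
    smul_smul, sq]

theorem mul_minkowski_mul_transpose_apply (A : Matrix (Fin 4) (Fin 4) ℝ) (i j : Fin 4) :
    (A * η * Aᵀ) i j = A i 1 * A j 1 + A i 2 * A j 2 + A i 3 * A j 3 - A i 0 * A j 0 := by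
  simp [mul_apply, Fin.sum_univ_four]
  ring

def minor2 {m n R : Type*} [CommRing R] (A : Matrix m n R) (i j : m) (p q : n) : R :=
  A i p * A j q - A i q * A j p

theorem minor2_one {n R : Type*} [DecidableEq n] [CommRing R] (i j p q : n) :
    minor2 (1 : Matrix n n R) i j p q
      = (if i = p ∧ j = q then 1 else 0) - (if i = q ∧ j = p then 1 else 0) := by
  simp only [minor2, one_apply]
  split_ifs <;> simp_all

theorem eq_zero_of_minor2 {m n R : Type*} [CommRing R] [NoZeroDivisors R] {A : Matrix m n R}
    {i j : m} {p q k : n} (hpq : minor2 A i j p q ≠ 0) (hpk : minor2 A i j p k = 0)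
    (hqk : minor2 A i j q k = 0) : A i k = 0 ∧ A j k = 0 := by
  unfold minor2 at *
  constructor
  · refine (mul_eq_zero.mp ?_).resolve_right hpq
    linear_combination A i q * hpk - A i p * hqk
  · refine (mul_eq_zero.mp ?_).resolve_right hpq
    linear_combination A j q * hpk - A j p * hqk

theorem minkowski_lagrange_identity (A : Matrix (Fin 4) (Fin 4) ℝ) (i j : Fin 4) :
    (A * η * Aᵀ) i i * (A * η * Aᵀ) j j - (A * η * Aᵀ) i j ^ 2
      = minor2 A i j 1 2 ^ 2 + minor2 A i j 1 3 ^ 2 + minor2 A i j 2 3 ^ 2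
        - minor2 A i j 0 1 ^ 2 - minor2 A i j 0 2 ^ 2 - minor2 A i j 0 3 ^ 2 := by
  simp only [mul_minkowski_mul_transpose_apply, minor2]
  ring

theorem exists_spatial_rows_eq_smul_one {A : Matrix (Fin 4) (Fin 4) ℝ} {t c : ℝ} (ht : 0 < t)
    (hA : A * η * Aᵀ = t • η)
    (hc : ∀ i j, 0 < i → i < j → ∀ p q, minor2 A i j p q = c * minor2 1 i j p q) :
    ∃ a ≠ 0, ∀ i, i ≠ 0 → ∀ j, A i j = a * (1 : Matrix (Fin 4) (Fin 4) ℝ) i j := by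
  have h12 := hc 1 2 (by decide) (by decide)
  have h13 := hc 1 3 (by decide) (by decide)
  have h23 := hc 2 3 (by decide) (by decide)
  simp only [minor2_one] at h12 h13 h23
  have hc0 : c ≠ 0 := by
    have h : t * t = c ^ 2 := by simpa [hA, h12] using minkowski_lagrange_identity A 1 2
    rintro rfl
    exact ht.ne' (by simpa using h)
  have ne12 : minor2 A 1 2 1 2 ≠ 0 := by simpa [h12]
  have ne13 : minor2 A 1 3 1 3 ≠ 0 := by simpa [h13]
  have ne23 : minor2 A 2 3 2 3 ≠ 0 := by simpa [h23]
  obtain ⟨z10, z20⟩ := eq_zero_of_minor2 (k := 0) ne12 (by simp [h12]) (by simp [h12])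
  obtain ⟨z13, z23⟩ := eq_zero_of_minor2 (k := 3) ne12 (by simp [h12]) (by simp [h12])
  obtain ⟨z12, z32⟩ := eq_zero_of_minor2 (k := 2) ne13 (by simp [h13]) (by simp [h13])
  obtain ⟨-, z30⟩ := eq_zero_of_minor2 (k := 0) ne13 (by simp [h13]) (by simp [h13])
  obtain ⟨z21, z31⟩ := eq_zero_of_minor2 (k := 1) ne23 (by simp [h23]) (by simp [h23])
  have d12 := h12 1 2
  have d13 := h13 1 3
  have d23 := h23 2 3
  simp [minor2, z12, z13, z23] at d12 d13 d23
  have hA11 : A 1 1 ≠ 0 := left_ne_zero_of_mul (d12 ▸ hc0)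
  have hA33 : A 3 3 ≠ 0 := right_ne_zero_of_mul (d13 ▸ hc0)
  have e22 : A 2 2 = A 1 1 := mul_right_cancel₀ hA33 (by rw [d13, d23])
  have e33 : A 3 3 = A 1 1 := mul_left_cancel₀ hA11 (by rw [d13, ← d12, e22])
  refine ⟨A 1 1, hA11, fun i hi j => ?_⟩
  fin_cases i
  · exact absurd rfl hi
  all_goals fin_cases j <;> simp [*]

theorem eq_smul_one_or_eq_smul_minkowski {A : Matrix (Fin 4) (Fin 4) ℝ} {t a : ℝ} (ha : a ≠ 0)
    (hA : A * η * Aᵀ = t • η)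
    (hrows : ∀ i, i ≠ 0 → ∀ j, A i j = a * (1 : Matrix (Fin 4) (Fin 4) ℝ) i j) :
    A = a • 1 ∨ A = a • η := by
  have hη (i j : Fin 4) := congrFun₂ hA i j
  simp only [mul_minkowski_mul_transpose_apply, Matrix.smul_apply, smul_eq_mul] at hη
  have r (i j : Fin 4) (hi : i ≠ 0) := hrows i hi j
  simp only [one_apply] at r
  have z01 : A 0 1 = 0 := by simpa [r, ha] using hη 0 1
  have z02 : A 0 2 = 0 := by simpa [r, ha] using hη 0 2
  have z03 : A 0 3 = 0 := by simpa [r, ha] using hη 0 3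
  have h00 : A 0 0 ^ 2 = a ^ 2 := by
    have h0 := hη 0 0
    have h1 := hη 1 1
    simp [r, z01, z02, z03] at h0 h1
    linear_combination h0 - h1
  refine (sq_eq_sq_iff_eq_or_eq_neg.mp h00).imp (fun h => ?_) (fun h => ?_) <;> ext i j <;>
    fin_cases i <;> fin_cases j <;> simp [r, h, z01, z02, z03]

theorem fderiv_apply_eq_sum_of_eventuallyEq {E ι : Type*} [NormedAddCommGroup E]
    [NormedSpace ℝ E] [Fintype ι] {g : E → ℝ} {h : ι → E → ℝ} {a : ι → ℝ} {y : E}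
    (hg : g =ᶠ[𝓝 y] fun z => ∑ j, a j * h j z) (hh : ∀ j, DifferentiableAt ℝ (h j) y) (w : E) :
    fderiv ℝ g y w = ∑ j, a j * fderiv ℝ (h j) y w := by
  rw [hg.fderiv_eq, fderiv_fun_sum fun j _ => (hh j).const_mul (a j), _root_.sum_apply]
  simp [fderiv_const_mul (hh _)]

theorem cmin_eq_sum_mul_cmin (A : Matrix (Fin 4) (Fin 4) ℝ) (m mstar : Fin 4 → ℝ × ℝ → ℝ)
    (d : (ℝ × ℝ → ℝ) → ℝ × ℝ → ℝ) (x : ℝ × ℝ)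
    (hval : ∀ i, mstar i x = ∑ j, A i j * m j x)
    (hder : ∀ i, d (mstar i) x = ∑ j, A i j * d (m j) x) (i j : Fin 4) :
    cmin d mstar i j x = ∑ p, ∑ q, A i p * A j q * cmin d m p q x := by
  simp only [cmin, hval, hder, Fin.sum_univ_four]
  ring

theorem cmin_fderiv_eq_sum_mul_cmin {Ω : Set (ℝ × ℝ)} (hΩ : IsOpen Ω)
    {A : Matrix (Fin 4) (Fin 4) ℝ} {m mstar : Fin 4 → ℝ × ℝ → ℝ}
    (hm : ∀ x ∈ Ω, ∀ j, DifferentiableAt ℝ (m j) x)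
    (hrel : ∀ x ∈ Ω, ∀ i, mstar i x = ∑ j, A i j * m j x) (w : ℝ × ℝ) {x : ℝ × ℝ} (hx : x ∈ Ω)
    (i j : Fin 4) :
    cmin (fun g y => fderiv ℝ g y w) mstar i j x
      = ∑ p, ∑ q, A i p * A j q * cmin (fun g y => fderiv ℝ g y w) m p q x := by
  refine cmin_eq_sum_mul_cmin A m mstar _ x (hrel x hx) (fun k => ?_) i j
  refine fderiv_apply_eq_sum_of_eventuallyEq ?_ (hm x hx) w
  filter_upwards [hΩ.mem_nhds hx] with y hy using hrel y hy k

noncomputable def perspectiveDefect (f : ℝ) (c : Fin 4 → ℝ × ℝ → ℝ) (x : ℝ × ℝ) : ℝ :=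
  x.1 * cmin pu c 1 2 x + x.2 * cmin pv c 1 2 x + f * cmin pv c 1 3 x - f * cmin pu c 2 3 x

noncomputable def perspectiveFamily (f : ℝ) (m : Fin 4 → ℝ × ℝ → ℝ) : Fin 17 → ℝ × ℝ → ℝ :=
  ![fun y => f * cmin pu m 0 1 y, fun y => f * cmin pu m 0 2 y,
    fun y => f * cmin pu m 0 3 y, fun y => f * cmin pu m 1 2 y,
    fun y => f * cmin pu m 1 3 y, fun y => f * cmin pu m 2 3 y,
    fun y => f * cmin pv m 0 1 y, fun y => f * cmin pv m 0 2 y,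
    fun y => f * cmin pv m 0 3 y, fun y => f * cmin pv m 1 2 y,
    fun y => f * cmin pv m 1 3 y, fun y => f * cmin pv m 2 3 y,
    fun y => y.1 * cmin pu m 0 1 y + y.2 * cmin pv m 0 1 y,
    fun y => y.1 * cmin pu m 0 2 y + y.2 * cmin pv m 0 2 y,
    fun y => y.1 * cmin pu m 0 3 y + y.2 * cmin pv m 0 3 y,
    fun y => y.1 * cmin pu m 1 3 y + y.2 * cmin pv m 1 3 y,
    fun y => y.1 * cmin pu m 2 3 y + y.2 * cmin pv m 2 3 y]

theorem minor2_eq_of_perspectiveDefect_eq_zero {Ω : Set (ℝ × ℝ)} {f : ℝ}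
    {A : Matrix (Fin 4) (Fin 4) ℝ} {m mstar : Fin 4 → ℝ × ℝ → ℝ}
    (hcu : ∀ x ∈ Ω, ∀ i j, cmin pu mstar i j x = ∑ p, ∑ q, A i p * A j q * cmin pu m p q x)
    (hcv : ∀ x ∈ Ω, ∀ i j, cmin pv mstar i j x = ∑ p, ∑ q, A i p * A j q * cmin pv m p q x)
    (hint : ∀ x ∈ Ω, perspectiveDefect f m x = 0)
    (hints : ∀ x ∈ Ω, perspectiveDefect f mstar x = 0)
    (hnondeg : LinearIndependent ℝ fun k (x : Ω) => perspectiveFamily f m k x) :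
    ∀ i j, 0 < i → i < j → ∀ p q, minor2 A i j p q = minor2 A 1 2 1 2 * minor2 1 i j p q := by
  -- the coefficients of `perspectiveDefect f mstar - minor2 A 1 2 1 2 * perspectiveDefect f m`
  have hcoef := Fintype.linearIndependent_iff.mp hnondeg
    ![-minor2 A 2 3 0 1, -minor2 A 2 3 0 2, -minor2 A 2 3 0 3,
      -minor2 A 2 3 1 2, -minor2 A 2 3 1 3, minor2 A 1 2 1 2 - minor2 A 2 3 2 3,
      minor2 A 1 3 0 1, minor2 A 1 3 0 2, minor2 A 1 3 0 3,
      minor2 A 1 3 1 2, minor2 A 1 3 1 3 - minor2 A 1 2 1 2, minor2 A 1 3 2 3,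
      minor2 A 1 2 0 1, minor2 A 1 2 0 2, minor2 A 1 2 0 3,
      minor2 A 1 2 1 3, minor2 A 1 2 2 3]
    (by
      funext ⟨x, hx⟩
      have h := hints x hx
      have h0 := hint x hx
      simp only [perspectiveDefect, hcu x hx, hcv x hx] at h h0
      simp only [cmin, Fin.sum_univ_four] at h h0
      simp only [Finset.sum_apply, Pi.smul_apply, smul_eq_mul, Pi.zero_apply,
        Fin.sum_univ_succ, Fin.sum_univ_zero, Matrix.cons_val_zero, Matrix.cons_val_succ,
        perspectiveFamily, cmin, minor2, add_zero]
      linear_combination h - (A 1 1 * A 2 2 - A 1 2 * A 2 1) * h0)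
  simp only [Fin.forall_fin_succ, Matrix.cons_val_zero, Matrix.cons_val_succ, minor2] at hcoef
  obtain ⟨e0, e1, e2, e3, e4, e5, e6, e7, e8, e9, e10, e11, e12, e13, e14, e15, e16, -⟩ := hcoef
  intro i j hi hij p q
  fin_cases i <;> fin_cases j <;> simp at hi hij <;> fin_cases p <;> fin_cases q <;>
    simp [minor2] <;> linarith

theorem perspective_uniqueness_general
    (Ω : Set (ℝ × ℝ)) (hΩ : IsOpen Ω) (f : ℝ)
    (ρ ρs n1 n2 n3 n1s n2s n3s : ℝ × ℝ → ℝ)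
    (hρ : ∀ x ∈ Ω, DifferentiableAt ℝ ρ x)
    (hρpos : ∀ x ∈ Ω, 0 < ρ x) (hρspos : ∀ x ∈ Ω, 0 < ρs x)
    (hn1 : ∀ x ∈ Ω, DifferentiableAt ℝ n1 x) (hn2 : ∀ x ∈ Ω, DifferentiableAt ℝ n2 x)
    (hn3 : ∀ x ∈ Ω, DifferentiableAt ℝ n3 x)
    (hn3neg : ∀ x ∈ Ω, n3 x < 0) (hn3sneg : ∀ x ∈ Ω, n3s x < 0)
    (m mstar : Fin 4 → ℝ × ℝ → ℝ)
    (hm : m = ![ρ, fun x => ρ x * n1 x, fun x => ρ x * n2 x, fun x => ρ x * n3 x])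
    (hms : mstar = ![ρs, fun x => ρs x * n1s x, fun x => ρs x * n2s x,
      fun x => ρs x * n3s x])
    (A : Matrix (Fin 4) (Fin 4) ℝ) (hA : IsScaledLorentz A)
    (hrel : ∀ x ∈ Ω, ∀ i : Fin 4, mstar i x = ∑ j : Fin 4, A i j * m j x)
    (hint : ∀ x ∈ Ω,
      x.1 * cmin pu m 1 2 x + x.2 * cmin pv m 1 2 x
        + f * cmin pv m 1 3 x - f * cmin pu m 2 3 x = 0)
    (hints : ∀ x ∈ Ω,
      x.1 * cmin pu mstar 1 2 x + x.2 * cmin pv mstar 1 2 x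
        + f * cmin pv mstar 1 3 x - f * cmin pu mstar 2 3 x = 0)
    (hnondeg : LinearIndependent ℝ
      (fun (k : Fin 17) (x : Ω) =>
        (![fun y => f * cmin pu m 0 1 y, fun y => f * cmin pu m 0 2 y,
           fun y => f * cmin pu m 0 3 y, fun y => f * cmin pu m 1 2 y,
           fun y => f * cmin pu m 1 3 y, fun y => f * cmin pu m 2 3 y,
           fun y => f * cmin pv m 0 1 y, fun y => f * cmin pv m 0 2 y,
           fun y => f * cmin pv m 0 3 y, fun y => f * cmin pv m 1 2 y,
           fun y => f * cmin pv m 1 3 y, fun y => f * cmin pv m 2 3 y,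
           fun y => y.1 * cmin pu m 0 1 y + y.2 * cmin pv m 0 1 y,
           fun y => y.1 * cmin pu m 0 2 y + y.2 * cmin pv m 0 2 y,
           fun y => y.1 * cmin pu m 0 3 y + y.2 * cmin pv m 0 3 y,
           fun y => y.1 * cmin pu m 1 3 y + y.2 * cmin pv m 1 3 y,
           fun y => y.1 * cmin pu m 2 3 y + y.2 * cmin pv m 2 3 y] k) (x : ℝ × ℝ))) :
    ∃ α : ℝ, 0 < α ∧ A = α • (1 : Matrix (Fin 4) (Fin 4) ℝ) := by
  obtain ⟨t, ht, hη⟩ := hA.exists_mul_mul_transpose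
  have hdm : ∀ x ∈ Ω, ∀ j, DifferentiableAt ℝ (m j) x := by
    intro x hx j
    subst hm
    fin_cases j
    exacts [hρ x hx, (hρ x hx).mul (hn1 x hx), (hρ x hx).mul (hn2 x hx), (hρ x hx).mul (hn3 x hx)]
  have hminor := minor2_eq_of_perspectiveDefect_eq_zero
    (fun x hx => cmin_fderiv_eq_sum_mul_cmin hΩ hdm hrel (1, 0) hx)
    (fun x hx => cmin_fderiv_eq_sum_mul_cmin hΩ hdm hrel (0, 1) hx) hint hints hnondeg
  obtain ⟨a, ha, hrows⟩ := exists_spatial_rows_eq_smul_one ht hη hminor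
  -- a linearly independent family of functions on `Ω` forces `Ω ≠ ∅`
  obtain ⟨⟨x, hx⟩, -⟩ := Function.ne_iff.mp (hnondeg.ne_zero 0)
  have h0 := hrel x hx 0
  have h3 := hrel x hx 3
  subst hm hms
  rcases eq_smul_one_or_eq_smul_minkowski ha hη hrows with rfl | rfl
  · refine ⟨a, ?_, rfl⟩
    simp [Fin.sum_univ_four] at h0
    exact pos_of_mul_pos_left (h0 ▸ hρspos x hx) (hρpos x hx).le
  · exfalso
    simp [Fin.sum_univ_four] at h0 h3
    have hneg : a < 0 := by nlinarith [hρpos x hx, hρspos x hx]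
    have hpos : 0 < a :=
      pos_of_mul_neg_left (h3 ▸ mul_neg_of_pos_of_neg (hρspos x hx) (hn3sneg x hx))
        (mul_neg_of_pos_of_neg (hρpos x hx) (hn3neg x hx)).le
    exact hneg.not_gt hpos

/-- Under perspective projection, a scaled Lorentz transformation relating two
integrable, non-degenerate photometric stereo solutions must be a positive multiple
of the identity: the problem is well-posed. -/
theorem perspective_uniqueness
    (Ω : Set (ℝ × ℝ)) (hΩ : IsOpen Ω) (f : ℝ) (hf : 0 < f)
    (ρ ρs n1 n2 n3 n1s n2s n3s : ℝ × ℝ → ℝ)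
    (hρ : ∀ x ∈ Ω, DifferentiableAt ℝ ρ x) (hρs : ∀ x ∈ Ω, DifferentiableAt ℝ ρs x)
    (hρpos : ∀ x ∈ Ω, 0 < ρ x) (hρspos : ∀ x ∈ Ω, 0 < ρs x)
    (hn1 : ∀ x ∈ Ω, DifferentiableAt ℝ n1 x) (hn2 : ∀ x ∈ Ω, DifferentiableAt ℝ n2 x)
    (hn3 : ∀ x ∈ Ω, DifferentiableAt ℝ n3 x)
    (hn1s : ∀ x ∈ Ω, DifferentiableAt ℝ n1s x) (hn2s : ∀ x ∈ Ω, DifferentiableAt ℝ n2s x)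
    (hn3s : ∀ x ∈ Ω, DifferentiableAt ℝ n3s x)
    (hunit : ∀ x ∈ Ω, (n1 x)^2 + (n2 x)^2 + (n3 x)^2 = 1)
    (hunits : ∀ x ∈ Ω, (n1s x)^2 + (n2s x)^2 + (n3s x)^2 = 1)
    (hn3neg : ∀ x ∈ Ω, n3 x < 0) (hn3sneg : ∀ x ∈ Ω, n3s x < 0)
    (m mstar : Fin 4 → ℝ × ℝ → ℝ)
    (hm : m = ![ρ, fun x => ρ x * n1 x, fun x => ρ x * n2 x, fun x => ρ x * n3 x])
    (hms : mstar = ![ρs, fun x => ρs x * n1s x, fun x => ρs x * n2s x,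
      fun x => ρs x * n3s x])
    (A : Matrix (Fin 4) (Fin 4) ℝ) (hA : IsScaledLorentz A)
    (hrel : ∀ x ∈ Ω, ∀ i : Fin 4, mstar i x = ∑ j : Fin 4, A i j * m j x)
    (hint : ∀ x ∈ Ω,
      x.1 * cmin pu m 1 2 x + x.2 * cmin pv m 1 2 x
        + f * cmin pv m 1 3 x - f * cmin pu m 2 3 x = 0)
    (hints : ∀ x ∈ Ω,
      x.1 * cmin pu mstar 1 2 x + x.2 * cmin pv mstar 1 2 x
        + f * cmin pv mstar 1 3 x - f * cmin pu mstar 2 3 x = 0)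
    (hnondeg : LinearIndependent ℝ
      (fun (k : Fin 17) (x : Ω) =>
        (![fun y => f * cmin pu m 0 1 y, fun y => f * cmin pu m 0 2 y,
           fun y => f * cmin pu m 0 3 y, fun y => f * cmin pu m 1 2 y,
           fun y => f * cmin pu m 1 3 y, fun y => f * cmin pu m 2 3 y,
           fun y => f * cmin pv m 0 1 y, fun y => f * cmin pv m 0 2 y,
           fun y => f * cmin pv m 0 3 y, fun y => f * cmin pv m 1 2 y,
           fun y => f * cmin pv m 1 3 y, fun y => f * cmin pv m 2 3 y,
           fun y => y.1 * cmin pu m 0 1 y + y.2 * cmin pv m 0 1 y,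
           fun y => y.1 * cmin pu m 0 2 y + y.2 * cmin pv m 0 2 y,
           fun y => y.1 * cmin pu m 0 3 y + y.2 * cmin pv m 0 3 y,
           fun y => y.1 * cmin pu m 1 3 y + y.2 * cmin pv m 1 3 y,
           fun y => y.1 * cmin pu m 2 3 y + y.2 * cmin pv m 2 3 y] k) (x : ℝ × ℝ))) :
    ∃ α : ℝ, 0 < α ∧ A = α • (1 : Matrix (Fin 4) (Fin 4) ℝ) :=
  perspective_uniqueness_general Ω hΩ f ρ ρs n1 n2 n3 n1s n2s n3s hρ hρpos hρspos hn1 hn2 hn3 hn3neg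
    hn3sneg m mstar hm hms A hA hrel hint hints hnondeg
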